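/- Let γ: [0,1] → ℂ ∖ {0} be an affine segment, γ(t) = (1−t)z₀ + t z₁ with z₀, z₁ ∈ ℂ and 0 not on the segment. Then ∫_γ |Im(dz/z)| = ∫₀¹ |Im(γ'(t)/γ(t))| dt ≤ π. -/

import Mathlib

/-! Write `γ(t) = z₀ + t w` with `w = z₁ - z₀` and `u = w̄ z₀`. Then
`w / γ(t) = |w|² / (u + t |w|²)`, so `|Im(γ'/γ)| = |w|² |Im u| / ((Re u + t |w|²)² + (Im u)²)`,
which is the derivative of `arctan ((Re u + t |w|²) / |Im u|)`. An arctangent varies by less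
than `π`. If `Im u = 0` the segment lies on a line through `0` and the integrand vanishes,
also where it passes through `0` (as `x / 0 = 0`). -/

open Real ComplexConjugate
open Complex (normSq)

theorem hasDerivAt_arctan_affine_div_abs {β : ℝ} (hβ : β ≠ 0) (α k t : ℝ) :
    HasDerivAt (fun t ↦ arctan ((α + k * t) / |β|))
      (k * |β| / ((α + k * t) ^ 2 + β ^ 2)) t := by
  have haffine : HasDerivAt (fun t ↦ (α + k * t) / |β|) (k / |β|) t := by
    simpa using (((hasDerivAt_id t).const_mul k).const_add α).div_const |β|
  refine ((hasDerivAt_arctan _).comp t haffine).congr_deriv ?_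
  rw [← sq_abs β]
  field_simp
  ring

theorem integral_mul_abs_div_sq_add_sq_lt_pi (α β k a b : ℝ) :
    ∫ t in a..b, k * |β| / ((α + k * t) ^ 2 + β ^ 2) < π := by
  rcases eq_or_ne β 0 with rfl | hβ
  · simp [pi_pos]
  have hpos : ∀ t, 0 < (α + k * t) ^ 2 + β ^ 2 := fun t ↦ by positivity
  have hcont : Continuous fun t ↦ k * |β| / ((α + k * t) ^ 2 + β ^ 2) :=
    continuous_const.div (by fun_prop) fun t ↦ (hpos t).ne'
  rw [intervalIntegral.integral_eq_sub_of_hasDerivAt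
    (fun t _ ↦ hasDerivAt_arctan_affine_div_abs hβ α k t) (hcont.intervalIntegrable a b)]
  linarith [arctan_lt_pi_div_two ((α + k * b) / |β|),
    neg_pi_div_two_lt_arctan ((α + k * a) / |β|)]

theorem im_div_add_ofReal_mul (z w : ℂ) (t : ℝ) :
    (w / (z + t * w)).im = -(normSq w * (conj w * z).im) /
      (((conj w * z).re + normSq w * t) ^ 2 + (conj w * z).im ^ 2) := by
  rcases eq_or_ne w 0 with rfl | hw
  · simp
  have hconj : w / (z + t * w) = normSq w / (conj w * z + (normSq w * t : ℝ)) := by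
    rw [← mul_div_mul_right w _ ((map_ne_zero conj).mpr hw), add_mul, mul_assoc,
      Complex.mul_conj]
    push_cast
    ring
  rw [hconj, div_eq_mul_inv, Complex.im_ofReal_mul, Complex.inv_im, Complex.normSq_apply (_ + _)]
  simp only [Complex.add_re, Complex.add_im, Complex.ofReal_re, Complex.ofReal_im]
  ring

theorem angular_variation_of_segment_le_pi_general (z₀ z₁ : ℂ) :
    (∫ t in (0 : ℝ)..1,
        |((z₁ - z₀) / ((1 - (t : ℂ)) * z₀ + (t : ℂ) * z₁)).im|)
      ≤ Real.pi := by
  set u := conj (z₁ - z₀) * z₀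
  have hintegrand : ∀ t : ℝ, |((z₁ - z₀) / ((1 - (t : ℂ)) * z₀ + (t : ℂ) * z₁)).im| =
      normSq (z₁ - z₀) * |u.im| / ((u.re + normSq (z₁ - z₀) * t) ^ 2 + u.im ^ 2) := by
    intro t
    rw [show (1 - (t : ℂ)) * z₀ + t * z₁ = z₀ + t * (z₁ - z₀) by ring,
      im_div_add_ofReal_mul, abs_div, abs_neg, abs_mul, abs_of_nonneg (Complex.normSq_nonneg _),
      abs_of_nonneg (a := _ + _) (by positivity)]
  simp_rw [hintegrand]
  exact (integral_mul_abs_div_sq_add_sq_lt_pi _ _ _ 0 1).le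

/-- the total angular variation of an affine segment avoiding
the origin, seen from the origin, is at most `π`:
`∫₀¹ |Im(γ'(t)/γ(t))| dt ≤ π` for `γ(t) = (1−t)z₀ + t z₁ ≠ 0`. -/
theorem angular_variation_of_segment_le_pi (z₀ z₁ : ℂ)
    (h : ∀ t ∈ Set.Icc (0 : ℝ) 1, (1 - (t : ℂ)) * z₀ + (t : ℂ) * z₁ ≠ 0) :
    (∫ t in (0 : ℝ)..1,
        |((z₁ - z₀) / ((1 - (t : ℂ)) * z₀ + (t : ℂ) * z₁)).im|)
      ≤ Real.pi :=
  angular_variation_of_segment_le_pi_general z₀ z₁
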